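/- For all integers r, s ≥ 0 with (r,s) ≠ (0,0), set A(r,s) = 24 − 66r² − 66rs − 99r − 22s² − 55s and t_{r,s} = sqrt( sqrt(A(r,s)² + 64) + A(r,s) ) / (2√2). Then 0 < t_{r,s} < 1 and (2 + 12t_{r,s}² − 2t_{r,s}⁴)/(33 t_{r,s}²) = (9r + 6r² + 5s + 6rs + 2s²)/6; that is, t_{r,s} is a degeneracy (bifurcation) instant of the canonical variation n_t on G₂/T, at which scal(n_t)/11 equals the eigenvalue (9r + 6r² + 5s + 6rs + 2s²)/6 of the Laplacian of the base G₂/SO(4). -/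
import Mathlib


/-- The quantity `A(r,s) = 24 - 66r² - 66rs - 99r - 22s² - 55s`. -/
noncomputable def AG (r s : ℕ) : ℝ :=
  24 - 66 * r ^ 2 - 66 * r * s - 99 * r - 22 * s ^ 2 - 55 * s

/-- The degeneracy instants `t_{r,s} = sqrt(sqrt(A(r,s)² + 64) + A(r,s))/(2√2)`
of the canonical variation `n_t` on `G₂/T`. -/
noncomputable def tG (r s : ℕ) : ℝ :=
  Real.sqrt (Real.sqrt ((AG r s) ^ 2 + 64) + AG r s) / (2 * Real.sqrt 2)

/-- For nonnegative integers `(r,s) ≠ (0,0)`, `t_{r,s}` satisfies `0 < t_{r,s} < 1`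
and `(2 + 12t² - 2t⁴)/(33t²) = (9r + 6r² + 5s + 6rs + 2s²)/6` at `t = t_{r,s}`:
`t_{r,s}` is a degeneracy (bifurcation) instant of `n_t` on `G₂/T` at which
`scal(n_t)/11` equals the eigenvalue `(9r + 6r² + 5s + 6rs + 2s²)/6` of the
Laplacian of the base `G₂/SO(4)`. -/
theorem tG_degeneracy (r s : ℕ) (h : (r, s) ≠ (0, 0)) :
    (0 < tG r s ∧ tG r s < 1) ∧
    (2 + 12 * (tG r s) ^ 2 - 2 * (tG r s) ^ 4) / (33 * (tG r s) ^ 2)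
      = (9 * r + 6 * r ^ 2 + 5 * s + 6 * r * s + 2 * s ^ 2) / 6 := by
  set A : ℝ := AG r s with hA
  -- A is negative
  have hAneg : A < 0 := by
    have hrs : 1 ≤ r ∨ 1 ≤ s := by
      rcases Nat.eq_zero_or_pos r with hr | hr
      · rcases Nat.eq_zero_or_pos s with hs | hs
        · exact absurd (by simp [hr, hs]) h
        · exact Or.inr hs
      · exact Or.inl hr
    have hr0 : (0:ℝ) ≤ (r:ℝ) := Nat.cast_nonneg r
    have hs0 : (0:ℝ) ≤ (s:ℝ) := Nat.cast_nonneg s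
    rcases hrs with hr | hs
    · have : (1:ℝ) ≤ (r:ℝ) := by exact_mod_cast hr
      rw [hA]; unfold AG; nlinarith
    · have : (1:ℝ) ≤ (s:ℝ) := by exact_mod_cast hs
      rw [hA]; unfold AG; nlinarith
  set S : ℝ := Real.sqrt (A ^ 2 + 64) with hS
  have hSnn : 0 ≤ S := Real.sqrt_nonneg _
  have hS2 : S ^ 2 = A ^ 2 + 64 := Real.sq_sqrt (by positivity)
  have hSA : 0 < S + A := by nlinarith
  have hSA8 : S + A < 8 := by nlinarith
  -- t² value
  have htsq : (tG r s) ^ 2 = (S + A) / 8 := by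
    rw [tG, div_pow, mul_pow, Real.sq_sqrt hSA.le, Real.sq_sqrt (by norm_num : (0:ℝ) ≤ 2)]
    norm_num
  have htpos : 0 < tG r s := by
    rw [tG]
    positivity
  have htlt : tG r s < 1 := by
    nlinarith [htsq, htpos]
  refine ⟨⟨htpos, htlt⟩, ?_⟩
  have hu : (0:ℝ) < (tG r s) ^ 2 := by positivity
  have key : 4 * ((tG r s) ^ 2) ^ 2 = A * (tG r s) ^ 2 + 4 := by
    rw [htsq]; nlinarith [hS2]
  have hAdef : A = 24 - 66 * (r:ℝ) ^ 2 - 66 * r * s - 99 * r - 22 * (s:ℝ) ^ 2 - 55 * s := by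
    rw [hA]; unfold AG; ring
  rw [div_eq_div_iff (by positivity) (by norm_num)]
  have h4 : (tG r s) ^ 4 = ((tG r s) ^ 2) ^ 2 := by ring
  rw [h4]
  linear_combination (-3 : ℝ) * key + (-3 * (tG r s) ^ 2) * hAdef
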